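/- Let σ ∈ S_k and τ ∈ S_ℓ be incomparable patterns, let p = μ(T_σ < T_τ), and assume 0 < p < 1. Define F_{τ→σ} = (1/(1−p)) ∫_{{T_τ < T_σ}} (T_σ − T_τ) dμ and F_{σ→τ} = (1/p) ∫_{{T_σ < T_τ}} (T_τ − T_σ) dμ. Then p = (F_{τ→σ} + E_μ[T_τ] − E_μ[T_σ]) / (F_{τ→σ} + F_{σ→τ}). -/

import Mathlib

open MeasureTheory ProbabilityTheory Real

noncomputable section

/-- The window of `x` of length `k` starting at position `i` (0-indexed) is a consecutive
occurrence of the pattern `σ`, i.e., its standardization is `σ` (relative orders agree). -/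
def OccursAt {k : ℕ} (σ : Equiv.Perm (Fin k)) (x : ℕ → ℝ) (i : ℕ) : Prop :=
  ∀ a b : Fin k, x (i + a) < x (i + b) ↔ σ a < σ b

/-- `hitTime σ x` is the number of draws until the first consecutive occurrence of `σ`,
i.e., the least `j ≥ k` such that the window `x_{j-k}, …, x_{j-1}` is an occurrence of `σ`. -/
def hitTime {k : ℕ} (σ : Equiv.Perm (Fin k)) (x : ℕ → ℝ) : ℕ :=
  sInf {j | k ≤ j ∧ OccursAt σ x (j - k)}

/-- `μ` is the law of an i.i.d. sequence of uniform random variables on `[0,1]`: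
a probability measure on `ℕ → ℝ` whose finite-dimensional marginals are products of
the uniform measure on `[0,1]`. -/
def IsIIDUniform (μ : Measure (ℕ → ℝ)) : Prop :=
  IsProbabilityMeasure μ ∧
  ∀ n : ℕ, μ.map (fun x (i : Fin n) => x i) =
    Measure.pi (fun _ : Fin n => (volume : Measure ℝ).restrict (Set.Icc 0 1))

/-- The pattern `σ ∈ S_k` occurs consecutively at position `i` (0-indexed) in the
permutation `p ∈ S_n`, written in one-line notation. -/
def PermOccursAt {k n : ℕ} (σ : Equiv.Perm (Fin k)) (p : Equiv.Perm (Fin n)) (i : ℕ) : Prop :=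
  ∃ h : i + k ≤ n, ∀ a b : Fin k,
    p ⟨i + a, Nat.lt_of_lt_of_le (Nat.add_lt_add_left a.isLt i) h⟩ <
      p ⟨i + b, Nat.lt_of_lt_of_le (Nat.add_lt_add_left b.isLt i) h⟩ ↔ σ a < σ b

/-- `avoidCount σ n` is the number `α_n(σ)` of permutations in `S_n` avoiding `σ`
as a consecutive pattern. -/
def avoidCount {k : ℕ} (σ : Equiv.Perm (Fin k)) (n : ℕ) : ℕ :=
  Nat.card {p : Equiv.Perm (Fin n) // ∀ i, ¬ PermOccursAt σ p i}

/-- Neither of the patterns `σ`, `τ` contains a consecutive occurrence of the other. -/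
def Incomparable {k l : ℕ} (σ : Equiv.Perm (Fin k)) (τ : Equiv.Perm (Fin l)) : Prop :=
  (∀ i, ¬ PermOccursAt σ τ i) ∧ (∀ i, ¬ PermOccursAt τ σ i)

def nu : Measure ℝ := (volume : Measure ℝ).restrict (Set.Icc 0 1)

instance : IsProbabilityMeasure nu :=
  ⟨by simp [nu, Real.volume_Icc]⟩

lemma marg {μ : Measure (ℕ → ℝ)} (hμ : IsIIDUniform μ) (N : ℕ) (t : Fin N → Set ℝ)
    (ht : ∀ j, MeasurableSet (t j)) :
    μ {x : ℕ → ℝ | ∀ j : Fin N, x j ∈ t j} = ∏ j, nu (t j) := by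
  have hproj : Measurable (fun x : ℕ → ℝ => fun i : Fin N => x i) :=
    measurable_pi_lambda _ (fun i => measurable_pi_apply _)
  have hset : MeasurableSet (Set.pi Set.univ t) := MeasurableSet.univ_pi ht
  have hrw : {x : ℕ → ℝ | ∀ j : Fin N, x j ∈ t j}
      = (fun x : ℕ → ℝ => fun i : Fin N => x i) ⁻¹' (Set.pi Set.univ t) := by
    ext x; simp [Set.mem_pi]
  rw [hrw, ← Measure.map_apply hproj hset, hμ.2 N, Measure.pi_pi]
  rfl

lemma marg_block {μ : Measure (ℕ → ℝ)} (hμ : IsIIDUniform μ) (m K : ℕ)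
    (t : Fin K → Set ℝ) (ht : ∀ a, MeasurableSet (t a)) :
    μ {x : ℕ → ℝ | ∀ a : Fin K, x (m + a) ∈ t a} = ∏ a, nu (t a) := by
  set t' : Fin (m + K) → Set ℝ :=
    fun j => if h : m ≤ (j : ℕ) then t ⟨(j : ℕ) - m, by omega⟩ else Set.univ with ht'
  have ht'nat : ∀ a : Fin K, t' (Fin.natAdd m a) = t a := by
    intro a
    rw [ht']
    dsimp only
    rw [dif_pos (by simp)]
    congr 1
    ext
    simp
  have ht'cast : ∀ i : Fin m, t' (Fin.castAdd K i) = Set.univ := by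
    intro i
    rw [ht']
    dsimp only
    rw [dif_neg (by simp only [Fin.coe_castAdd]; omega)]
  have ht'meas : ∀ j, MeasurableSet (t' j) := by
    intro j
    rw [ht']
    dsimp only
    split
    · exact ht _
    · exact MeasurableSet.univ
  have key := marg hμ (m + K) t' ht'meas
  have hsets : {x : ℕ → ℝ | ∀ j : Fin (m + K), x j ∈ t' j}
      = {x : ℕ → ℝ | ∀ a : Fin K, x (m + a) ∈ t a} := by
    ext x
    constructor
    · intro hx a
      have h := hx (Fin.natAdd m a)
      rw [ht'nat] at h
      simpa [Fin.natAdd] using h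
    · intro hx j
      rw [ht']
      dsimp only
      split
      · rename_i h
        have h2 := hx ⟨(j : ℕ) - m, by omega⟩
        simpa [Nat.add_sub_cancel' h] using h2
      · trivial
  rw [hsets] at key
  rw [key, Fin.prod_univ_add]
  have h1 : (∏ i : Fin m, nu (t' (Fin.castAdd K i))) = 1 := by
    apply Finset.prod_eq_one
    intro i _
    rw [ht'cast]
    exact measure_univ
  rw [h1, one_mul]
  exact Finset.prod_congr rfl (fun a _ => by rw [ht'nat])

lemma marg_single {μ : Measure (ℕ → ℝ)} (hμ : IsIIDUniform μ) (i : ℕ) {A : Set ℝ}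
    (hA : MeasurableSet A) : μ {x : ℕ → ℝ | x i ∈ A} = nu A := by
  have := marg_block hμ i 1 (fun _ => A) (fun _ => hA)
  simpa using this


lemma nu_univ : nu Set.univ = 1 := measure_univ

lemma nu_restrict : nu = (volume : Measure ℝ).restrict (Set.Icc 0 1) := rfl

lemma isProb {μ : Measure (ℕ → ℝ)} (hμ : IsIIDUniform μ) : IsProbabilityMeasure μ := hμ.1

lemma iid_coords {μ : Measure (ℕ → ℝ)} (hμ : IsIIDUniform μ) :
    iIndepFun
      (fun i (x : ℕ → ℝ) => x i) μ := by
  rw [iIndepFun_iff_measure_inter_preimage_eq_mul]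
  intro S sets hsets
  classical
  set N := S.sup id + 1 with hN
  have hSN : ∀ i ∈ S, i < N := fun i hi => Nat.lt_succ_of_le (Finset.le_sup (f := id) hi)
  set t : Fin N → Set ℝ := fun j => if (j : ℕ) ∈ S then sets (j : ℕ) else Set.univ with htdef
  have htmeas : ∀ j, MeasurableSet (t j) := by
    intro j
    rw [htdef]
    dsimp only
    split
    · exact hsets _ ‹_›
    · exact MeasurableSet.univ
  have hrw : (⋂ i ∈ S, (fun x : ℕ → ℝ => x i) ⁻¹' sets i)
      = {x : ℕ → ℝ | ∀ j : Fin N, x j ∈ t j} := by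
    ext x
    simp only [Set.mem_iInter, Set.mem_preimage, Set.mem_setOf_eq, htdef]
    constructor
    · intro hx j
      split
      · exact hx _ ‹_›
      · trivial
    · intro hx i hi
      have := hx ⟨i, hSN i hi⟩
      dsimp only at this
      rwa [if_pos hi] at this
  rw [hrw, marg hμ N t htmeas]
  have hprod : ∏ j, nu (t j) = ∏ i ∈ S, nu (sets i) := by
    have step1 : ∏ j, nu (t j) = ∏ j : Fin N, if (j : ℕ) ∈ S then nu (sets (j : ℕ)) else 1 := by
      apply Finset.prod_congr rfl
      intro j _
      rw [htdef]
      dsimp only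
      split
      · rfl
      · exact nu_univ
    rw [step1, ← Finset.prod_filter]
    apply Finset.prod_bij (fun (j : Fin N) (_ : j ∈ Finset.univ.filter fun j : Fin N => (j : ℕ) ∈ S) => (j : ℕ))
    · intro a ha
      simpa using (Finset.mem_filter.1 ha).2
    · intro a _ b _ hab
      exact Fin.ext hab
    · intro b hb
      exact ⟨⟨b, hSN b hb⟩, Finset.mem_filter.2 ⟨Finset.mem_univ _, hb⟩, rfl⟩
    · intro a _
      rfl
  rw [hprod]
  exact Finset.prod_congr rfl (fun i hi => (marg_single hμ i (hsets i hi)).symm)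


section blocks

variable {k : ℕ} (σ : Equiv.Perm (Fin k))

/-- The target interval for position `a` of the pattern. -/
def Iv (σ : Equiv.Perm (Fin k)) (a : Fin k) : Set ℝ :=
  Set.Ico (((σ a : ℕ) : ℝ) / k) ((((σ a : ℕ) : ℝ) + 1) / k)

lemma measurableSet_Iv (a : Fin k) : MeasurableSet (Iv σ a) := measurableSet_Ico

lemma nu_Iv (hk : 0 < k) (a : Fin k) : nu (Iv σ a) = ENNReal.ofReal (1 / k) := by
  have hkR : (0 : ℝ) < k := by exact_mod_cast hk
  set v : ℝ := ((σ a : ℕ) : ℝ) with hv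
  have hv0 : 0 ≤ v := by positivity
  have hvk : v + 1 ≤ k := by
    have := (σ a).isLt
    rw [hv]
    exact_mod_cast Nat.succ_le_of_lt this
  have hsub : Set.Ico (v / k) ((v + 1) / k) ⊆ Set.Icc (0 : ℝ) 1 := by
    intro y hy
    constructor
    · exact le_trans (by positivity) hy.1
    · exact le_trans hy.2.le (by rw [div_le_one hkR]; exact hvk)
  rw [nu_restrict, Iv, Measure.restrict_apply measurableSet_Ico,
    Set.inter_eq_left.2 hsub, Real.volume_Ico]
  congr 1
  rw [div_sub_div_same]
  ring_nf

/-- The block event: coordinates `m, …, m+k-1` land in the intervals prescribed by `σ`. -/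
def Blk (σ : Equiv.Perm (Fin k)) (m : ℕ) : Set (ℕ → ℝ) :=
  {x | ∀ a : Fin k, x (m + a) ∈ Iv σ a}

lemma measurableSet_Blk (m : ℕ) : MeasurableSet (Blk σ m) := by
  have : Blk σ m = ⋂ a : Fin k, (fun x : ℕ → ℝ => x (m + a)) ⁻¹' Iv σ a := by
    ext x; simp [Blk]
  rw [this]
  exact MeasurableSet.iInter fun a => (measurable_pi_apply _) (measurableSet_Iv σ a)

lemma mu_Blk {μ : Measure (ℕ → ℝ)} (hμ : IsIIDUniform μ) (hk : 0 < k) (m : ℕ) :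
    μ (Blk σ m) = ENNReal.ofReal (1 / k) ^ k := by
  rw [show Blk σ m = {x : ℕ → ℝ | ∀ a : Fin k, x (m + a) ∈ Iv σ a} from rfl,
    marg_block hμ m k (Iv σ) (measurableSet_Iv σ)]
  rw [Finset.prod_congr rfl (fun a _ => nu_Iv σ hk a), Finset.prod_const,
    Finset.card_univ, Fintype.card_fin]

lemma Blk_occursAt {x : ℕ → ℝ} {m : ℕ} (hx : x ∈ Blk σ m) : OccursAt σ x m := by
  have key : ∀ a b : Fin k, σ a < σ b → x (m + a) < x (m + b) := by
    intro a b hab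
    have hk : (0 : ℝ) < k := by exact_mod_cast Fin.pos a
    have ha := hx a
    have hb := hx b
    have hstep : (((σ a : ℕ) : ℝ) + 1) / k ≤ ((σ b : ℕ) : ℝ) / k := by
      gcongr
      exact_mod_cast Nat.succ_le_of_lt hab
    calc x (m + a) < (((σ a : ℕ) : ℝ) + 1) / k := ha.2
      _ ≤ ((σ b : ℕ) : ℝ) / k := hstep
      _ ≤ x (m + b) := hb.1
  intro a b
  constructor
  · intro hlt
    rcases lt_trichotomy (σ a) (σ b) with h | h | h
    · exact h
    · exact absurd hlt (by rw [σ.injective h]; exact lt_irrefl _)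
    · exact absurd (key b a h) (not_lt.2 hlt.le)
  · exact key a b

lemma hitTime_le_of_blk {x : ℕ → ℝ} {j : ℕ} (hx : x ∈ Blk σ (j * k)) :
    hitTime σ x ≤ j * k + k := by
  apply Nat.sInf_le
  refine ⟨by omega, ?_⟩
  have : j * k + k - k = j * k := by omega
  rw [this]
  exact Blk_occursAt σ hx

/-- The bad event: no block occurrence among the first `n` disjoint blocks. -/
def Bad (σ : Equiv.Perm (Fin k)) (n : ℕ) : Set (ℕ → ℝ) :=
  {x | ∀ j < n, x ∉ Blk σ (j * k)}

lemma hit_pos_subset_bad {n : ℕ} (hk : 0 < k) :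
    {x : ℕ → ℝ | hitTime σ x = 0 ∨ n * k < hitTime σ x} ⊆ Bad σ n := by
  intro x hx j hj hblk
  have hle := hitTime_le_of_blk σ hblk
  rcases hx with h0 | hgt
  · -- hit time 0 but the defining set is nonempty, so sInf is in the set, hence ≥ k ≥ 1
    have hne : {i | k ≤ i ∧ OccursAt σ x (i - k)}.Nonempty :=
      ⟨j * k + k, by omega, by
        have : j * k + k - k = j * k := by omega
        rw [this]; exact Blk_occursAt σ hblk⟩
    have := Nat.sInf_mem hne
    rw [show sInf {i | k ≤ i ∧ OccursAt σ x (i - k)} = hitTime σ x from rfl, h0] at this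
    have h1 := this.1
    omega
  · have : j * k + k ≤ n * k := by
      calc j * k + k = (j + 1) * k := by ring
        _ ≤ n * k := Nat.mul_le_mul_right k (by omega)
    omega

lemma measurableSet_Bad (n : ℕ) : MeasurableSet (Bad σ n) := by
  have : Bad σ n = ⋂ j, ⋂ (_ : j < n), (Blk σ (j * k))ᶜ := by
    ext x; simp [Bad]
  rw [this]
  exact MeasurableSet.iInter fun j => MeasurableSet.iInter fun _ => (measurableSet_Blk σ _).compl

lemma mu_Bad {μ : Measure (ℕ → ℝ)} (hμ : IsIIDUniform μ) (hk : 0 < k) (n : ℕ) :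
    μ (Bad σ n) ≤ (1 - ENNReal.ofReal (1 / k) ^ k) ^ n := by
  haveI := isProb hμ
  set q : ENNReal := ENNReal.ofReal (1 / k) ^ k with hq
  induction n with
  | zero => simpa using prob_le_one
  | succ n ih =>
    classical
    -- index sets
    set S : Finset ℕ := Finset.range (n * k) with hS
    set T : Finset ℕ := Finset.image (fun a => n * k + a) (Finset.range k) with hT
    have hST : Disjoint S T := by
      rw [Finset.disjoint_left]
      intro i hiS hiT
      rw [hS, Finset.mem_range] at hiS
      rw [hT, Finset.mem_image] at hiT
      obtain ⟨a, _, rfl⟩ := hiT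
      omega
    have indep := (iid_coords hμ).indepFun_finset S T hST (fun i => measurable_pi_apply i)
    have hmemS : ∀ (j : ℕ), j < n → ∀ (a : Fin k), j * k + (a : ℕ) ∈ S := by
      intro j hj a
      rw [hS, Finset.mem_range]
      have h1 : j * k + (a : ℕ) < (j + 1) * k := by
        have := a.isLt
        rw [add_one_mul]
        omega
      exact lt_of_lt_of_le h1 (Nat.mul_le_mul_right k (by omega))
    have hmemT : ∀ a : Fin k, n * k + (a : ℕ) ∈ T := by
      intro a
      rw [hT, Finset.mem_image]
      exact ⟨a, Finset.mem_range.2 a.isLt, rfl⟩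
    set A : Set ((i : S) → ℝ) :=
      ⋂ j, ⋂ (hj : j < n), (⋂ a : Fin k,
        (fun y : (i : S) → ℝ => y ⟨j * k + (a : ℕ), hmemS j hj a⟩) ⁻¹' Iv σ a)ᶜ with hA
    set B : Set ((i : T) → ℝ) :=
      (⋂ a : Fin k, (fun z : (i : T) → ℝ => z ⟨n * k + (a : ℕ), hmemT a⟩) ⁻¹' Iv σ a)ᶜ with hB
    have hAmeas : MeasurableSet A := by
      refine MeasurableSet.iInter fun j => MeasurableSet.iInter fun hj =>
        (MeasurableSet.iInter fun a => ?_).compl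
      exact (show Measurable (fun y : (i : S) → ℝ => y (⟨j * k + (a : ℕ), hmemS j hj a⟩ : S))
        from measurable_pi_apply _) (measurableSet_Iv σ a)
    have hBmeas : MeasurableSet B := by
      refine (MeasurableSet.iInter fun a => ?_).compl
      exact (show Measurable (fun z : (i : T) → ℝ => z (⟨n * k + (a : ℕ), hmemT a⟩ : T))
        from measurable_pi_apply _) (measurableSet_Iv σ a)
    have hFA : (fun x : ℕ → ℝ => fun i : S => x i) ⁻¹' A = Bad σ n := by
      ext x
      simp only [hA, Set.mem_preimage, Set.mem_iInter, Set.mem_compl_iff, Bad, Set.mem_setOf_eq]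
      constructor
      · intro hx j hj hblk
        exact hx j hj (by intro a; exact hblk a)
      · intro hx j hj hblk
        exact hx j hj (by intro a; exact hblk a)
    have hGB : (fun x : ℕ → ℝ => fun i : T => x i) ⁻¹' B = (Blk σ (n * k))ᶜ := by
      ext x
      simp only [hB, Set.mem_preimage, Set.mem_compl_iff, Set.mem_iInter, Blk, Set.mem_setOf_eq]
    have hsplit : Bad σ (n + 1) = Bad σ n ∩ (Blk σ (n * k))ᶜ := by
      ext x
      simp only [Bad, Set.mem_setOf_eq, Set.mem_inter_iff, Set.mem_compl_iff]
      constructor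
      · intro hx
        exact ⟨fun j hj => hx j (by omega), hx n (by omega)⟩
      · rintro ⟨h1, h2⟩ j hj
        rcases Nat.lt_succ_iff_lt_or_eq.1 hj with h | rfl
        · exact h1 j h
        · exact h2
    have hmul : μ (Bad σ (n + 1)) = μ (Bad σ n) * μ ((Blk σ (n * k))ᶜ) := by
      rw [hsplit, ← hFA, ← hGB]
      exact (indepFun_iff_measure_inter_preimage_eq_mul.1 indep) A B hAmeas hBmeas
    have hcompl : μ ((Blk σ (n * k))ᶜ) = 1 - q := by
      rw [prob_compl_eq_one_sub (measurableSet_Blk σ _), mu_Blk σ hμ hk]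
    rw [hmul, hcompl, pow_succ]
    exact mul_le_mul' ih le_rfl

end blocks

section hit

variable {k : ℕ} (σ : Equiv.Perm (Fin k))

lemma measurableSet_E (j : ℕ) :
    MeasurableSet {x : ℕ → ℝ | k ≤ j ∧ OccursAt σ x (j - k)} := by
  by_cases hkj : k ≤ j
  · have : {x : ℕ → ℝ | k ≤ j ∧ OccursAt σ x (j - k)}
        = ⋂ a : Fin k, ⋂ b : Fin k,
          {x : ℕ → ℝ | x (j - k + a) < x (j - k + b) ↔ σ a < σ b} := by
      ext x
      simp [OccursAt, hkj]
    rw [this]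
    refine MeasurableSet.iInter fun a => MeasurableSet.iInter fun b => ?_
    by_cases hab : σ a < σ b
    · have : {x : ℕ → ℝ | x (j - k + a) < x (j - k + b) ↔ σ a < σ b}
          = {x : ℕ → ℝ | x (j - k + a) < x (j - k + b)} := by
        ext x; simp [hab]
      rw [this]
      exact measurableSet_lt (f := fun x : ℕ → ℝ => x (j - k + (a : ℕ)))
        (g := fun x : ℕ → ℝ => x (j - k + (b : ℕ)))
        (measurable_pi_apply _) (measurable_pi_apply _)
    · have : {x : ℕ → ℝ | x (j - k + a) < x (j - k + b) ↔ σ a < σ b}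
          = {x : ℕ → ℝ | x (j - k + a) < x (j - k + b)}ᶜ := by
        ext x; simp [hab]
      rw [this]
      exact (measurableSet_lt (f := fun x : ℕ → ℝ => x (j - k + (a : ℕ)))
        (g := fun x : ℕ → ℝ => x (j - k + (b : ℕ)))
        (measurable_pi_apply _) (measurable_pi_apply _)).compl
  · have : {x : ℕ → ℝ | k ≤ j ∧ OccursAt σ x (j - k)} = ∅ := by
      ext x; simp [hkj]
    rw [this]; exact MeasurableSet.empty

lemma measurable_hitTime : Measurable (hitTime σ) := by
  apply measurable_to_countable'
  intro m
  rcases m with _ | m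
  · have : hitTime σ ⁻¹' {0} = {x : ℕ → ℝ | k ≤ 0 ∧ OccursAt σ x (0 - k)}
        ∪ ⋂ j, {x : ℕ → ℝ | k ≤ j ∧ OccursAt σ x (j - k)}ᶜ := by
      ext x
      simp only [Set.mem_preimage, Set.mem_singleton_iff, hitTime, Nat.sInf_eq_zero,
        Set.mem_union, Set.mem_setOf_eq, Set.mem_iInter, Set.mem_compl_iff]
      constructor
      · rintro (h0 | hempty)
        · exact Or.inl h0
        · exact Or.inr fun j => by
            intro hj
            exact absurd (Set.eq_empty_iff_forall_notMem.1 hempty j) (by simpa using hj)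
      · rintro (h0 | hall)
        · exact Or.inl h0
        · exact Or.inr (Set.eq_empty_iff_forall_notMem.2 fun j hj => hall j hj)
    rw [this]
    exact (measurableSet_E σ 0).union (MeasurableSet.iInter fun j => (measurableSet_E σ j).compl)
  · have : hitTime σ ⁻¹' {m + 1} = {x : ℕ → ℝ | k ≤ m + 1 ∧ OccursAt σ x (m + 1 - k)}
        ∩ ⋂ j, ⋂ (_ : j < m + 1), {x : ℕ → ℝ | k ≤ j ∧ OccursAt σ x (j - k)}ᶜ := by
      ext x
      simp only [Set.mem_preimage, Set.mem_singleton_iff, Set.mem_inter_iff, Set.mem_iInter,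
        Set.mem_compl_iff, Set.mem_setOf_eq]
      constructor
      · intro h
        have hne : {j | k ≤ j ∧ OccursAt σ x (j - k)}.Nonempty := by
          by_contra hemp
          rw [Set.not_nonempty_iff_eq_empty] at hemp
          rw [hitTime, hemp, Nat.sInf_empty] at h
          omega
        have hmem := Nat.sInf_mem hne
        rw [show sInf {j | k ≤ j ∧ OccursAt σ x (j - k)} = hitTime σ x from rfl, h] at hmem
        refine ⟨hmem, fun j hj hjmem => ?_⟩
        have := Nat.sInf_le (s := {j | k ≤ j ∧ OccursAt σ x (j - k)}) hjmem
        rw [show sInf {j | k ≤ j ∧ OccursAt σ x (j - k)} = hitTime σ x from rfl, h] at this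
        omega
      · rintro ⟨hmem, hlt⟩
        have h1 : hitTime σ x ≤ m + 1 := Nat.sInf_le hmem
        have h2 : ¬ hitTime σ x < m + 1 := by
          intro hcon
          have hne : {j | k ≤ j ∧ OccursAt σ x (j - k)}.Nonempty := ⟨m + 1, hmem⟩
          have hmem2 := Nat.sInf_mem hne
          exact hlt _ hcon hmem2
        omega
    rw [this]
    exact (measurableSet_E σ (m + 1)).inter
      (MeasurableSet.iInter fun j => MeasurableSet.iInter fun _ =>
        (measurableSet_E σ j).compl)

lemma mu_hit_zero {μ : Measure (ℕ → ℝ)} (hμ : IsIIDUniform μ) (hk : 0 < k) :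
    μ {x : ℕ → ℝ | hitTime σ x = 0} = 0 := by
  set q : ENNReal := ENNReal.ofReal (1 / k) ^ k with hq
  have hq0 : q ≠ 0 := by
    rw [hq]
    apply pow_ne_zero
    simp only [ne_eq, ENNReal.ofReal_eq_zero, not_le]
    positivity
  have hlt1 : 1 - q < 1 := ENNReal.sub_lt_self ENNReal.one_ne_top one_ne_zero hq0
  have htend := ENNReal.tendsto_pow_atTop_nhds_zero_of_lt_one hlt1
  have hsub : ∀ n : ℕ, μ {x : ℕ → ℝ | hitTime σ x = 0} ≤ (1 - q) ^ n := by
    intro n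
    refine le_trans (measure_mono ?_) (mu_Bad σ hμ hk n)
    exact fun x hx => hit_pos_subset_bad σ hk (Or.inl hx)
  exact le_antisymm (ge_of_tendsto' htend hsub) zero_le

lemma lintegral_hit_lt_top {μ : Measure (ℕ → ℝ)} (hμ : IsIIDUniform μ) (hk : 0 < k) :
    ∫⁻ x, (hitTime σ x : ENNReal) ∂μ < ⊤ := by
  haveI := isProb hμ
  set q : ENNReal := ENNReal.ofReal (1 / k) ^ k with hq
  have hq0 : q ≠ 0 := by
    rw [hq]; apply pow_ne_zero
    simp only [ne_eq, ENNReal.ofReal_eq_zero, not_le]; positivity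
  have hq1 : q ≤ 1 := by
    rw [hq]
    apply pow_le_one₀ zero_le
    apply ENNReal.ofReal_le_one.2
    rw [div_le_one (by exact_mod_cast hk)]
    exact_mod_cast hk
  -- pointwise bound
  have hpt : ∀ x, (hitTime σ x : ENNReal)
      ≤ (k : ENNReal) * (1 + ∑' n : ℕ, (Bad σ (n + 1)).indicator (fun _ => (1 : ENNReal)) x) := by
    intro x
    by_cases h0 : hitTime σ x = 0
    · simp [h0]
    · set n₀ := (hitTime σ x - 1) / k with hn₀
      have hT2 : hitTime σ x ≤ (n₀ + 1) * k := by
        have h1 : hitTime σ x - 1 < (n₀ + 1) * k := by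
          rw [← Nat.div_lt_iff_lt_mul hk]
          omega
        omega
      have hgt : ∀ n, n < n₀ → (n + 1) * k < hitTime σ x := by
        intro n hn
        have h1 : (n + 1) * k ≤ n₀ * k := Nat.mul_le_mul_right k (by omega)
        have h2 : n₀ * k ≤ hitTime σ x - 1 := Nat.div_mul_le_self _ _
        omega
      have hsum : (n₀ : ENNReal)
          ≤ ∑' n : ℕ, (Bad σ (n + 1)).indicator (fun _ => (1 : ENNReal)) x := by
        have := ENNReal.sum_le_tsum (f := fun n : ℕ =>
          (Bad σ (n + 1)).indicator (fun _ => (1 : ENNReal)) x) (Finset.range n₀)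
        refine le_trans ?_ this
        have heq : ∀ n ∈ Finset.range n₀,
            (Bad σ (n + 1)).indicator (fun _ => (1 : ENNReal)) x = 1 := by
          intro n hn
          rw [Set.indicator_of_mem]
          exact hit_pos_subset_bad σ hk (Or.inr (hgt n (Finset.mem_range.1 hn)))
        rw [Finset.sum_congr rfl heq]
        simp
      calc (hitTime σ x : ENNReal) ≤ ((n₀ + 1) * k : ℕ) := by exact_mod_cast hT2
        _ = (k : ENNReal) * (1 + (n₀ : ENNReal)) := by push_cast; ring
        _ ≤ (k : ENNReal) * (1 + ∑' n : ℕ, (Bad σ (n + 1)).indicator (fun _ => (1 : ENNReal)) x) := by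
            exact mul_le_mul_right (add_le_add le_rfl hsum) _
  calc ∫⁻ x, (hitTime σ x : ENNReal) ∂μ
      ≤ ∫⁻ x, (k : ENNReal) * (1 + ∑' n : ℕ, (Bad σ (n + 1)).indicator (fun _ => (1 : ENNReal)) x) ∂μ :=
        lintegral_mono hpt
    _ = (k : ENNReal) * ∫⁻ x, (1 + ∑' n : ℕ, (Bad σ (n + 1)).indicator (fun _ => (1 : ENNReal)) x) ∂μ := by
        rw [lintegral_const_mul']
        exact ENNReal.natCast_ne_top k
    _ = (k : ENNReal) * (1 + ∑' n : ℕ, μ (Bad σ (n + 1))) := by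
        congr 1
        rw [lintegral_add_left measurable_const]
        congr 1
        · simp
        · rw [lintegral_tsum (fun n => ((measurable_const.indicator
            (measurableSet_Bad σ (n + 1)))).aemeasurable)]
          exact tsum_congr fun n => lintegral_indicator_one (measurableSet_Bad σ (n + 1))
    _ < ⊤ := by
        have hbound : ∑' n : ℕ, μ (Bad σ (n + 1)) ≤ ∑' n : ℕ, (1 - q) ^ n := by
          apply ENNReal.tsum_le_tsum
          intro n
          refine le_trans (mu_Bad σ hμ hk (n + 1)) ?_
          exact pow_le_pow_of_le_one zero_le tsub_le_self (by omega)
        rw [ENNReal.tsum_geometric, ENNReal.sub_sub_cancel ENNReal.one_ne_top hq1] at hbound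
        have : ∑' n : ℕ, μ (Bad σ (n + 1)) < ⊤ :=
          lt_of_le_of_lt hbound (ENNReal.inv_lt_top.2 (pos_iff_ne_zero.2 hq0))
        apply ENNReal.mul_lt_top (ENNReal.natCast_ne_top k).lt_top
        exact ENNReal.add_lt_top.2 ⟨ENNReal.one_lt_top, this⟩

lemma integrable_hit {μ : Measure (ℕ → ℝ)} (hμ : IsIIDUniform μ) (hk : 0 < k) :
    Integrable (fun x => (hitTime σ x : ℝ)) μ := by
  constructor
  · exact (measurable_from_nat.comp (measurable_hitTime σ)).aestronglyMeasurable
  · show (∫⁻ x, (‖(hitTime σ x : ℝ)‖₊ : ENNReal) ∂μ) < ⊤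
    have : ∀ x, ((‖(hitTime σ x : ℝ)‖₊ : ENNReal)) = (hitTime σ x : ENNReal) := by
      intro x
      rw [nnnorm_natCast]
      simp
    simp_rw [this]
    exact lintegral_hit_lt_top σ hμ hk


end hit

section inc
variable {k l : ℕ} {σ : Equiv.Perm (Fin k)} {τ : Equiv.Perm (Fin l)}

lemma k_pos_of_inc (hinc : Incomparable σ τ) : 0 < k := by
  by_contra h
  have hk : k = 0 := by omega
  subst hk
  exact hinc.1 0 ⟨by omega, fun a => a.elim0⟩

lemma l_pos_of_inc (hinc : Incomparable σ τ) : 0 < l := by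
  by_contra h
  have hl : l = 0 := by omega
  subst hl
  exact hinc.2 0 ⟨by omega, fun a => a.elim0⟩

lemma eq_hit_subset_zero (hinc : Incomparable σ τ) :
    {x : ℕ → ℝ | hitTime σ x = hitTime τ x} ⊆ {x : ℕ → ℝ | hitTime σ x = 0} := by
  intro x hxy
  simp only [Set.mem_setOf_eq] at hxy ⊢
  by_contra h0
  set j := hitTime σ x with hj
  have hτ0 : hitTime τ x = j := hxy.symm
  have hneσ : {i | k ≤ i ∧ OccursAt σ x (i - k)}.Nonempty := by
    by_contra hemp
    rw [Set.not_nonempty_iff_eq_empty] at hemp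
    exact h0 (by rw [hj, hitTime, hemp, Nat.sInf_empty])
  have hneτ : {i | l ≤ i ∧ OccursAt τ x (i - l)}.Nonempty := by
    by_contra hemp
    rw [Set.not_nonempty_iff_eq_empty] at hemp
    rw [hitTime, hemp, Nat.sInf_empty] at hτ0
    exact h0 (hj ▸ hτ0.symm ▸ rfl)
  have hmemσ := Nat.sInf_mem hneσ
  have hmemτ := Nat.sInf_mem hneτ
  rw [show sInf {i | k ≤ i ∧ OccursAt σ x (i - k)} = hitTime σ x from rfl, ← hj] at hmemσ
  rw [show sInf {i | l ≤ i ∧ OccursAt τ x (i - l)} = hitTime τ x from rfl, hτ0] at hmemτ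
  obtain ⟨hkj, hoccσ⟩ := hmemσ
  obtain ⟨hlj, hoccτ⟩ := hmemτ
  rcases le_total l k with hlk | hkl
  · -- τ occurs inside σ at position k - l
    refine hinc.2 (k - l) ⟨by omega, fun a b => ?_⟩
    have h1 := hoccσ ⟨k - l + (a : ℕ), by have := a.isLt; omega⟩
      ⟨k - l + (b : ℕ), by have := b.isLt; omega⟩
    have h2 := hoccτ a b
    have e1 : j - k + (k - l + (a : ℕ)) = j - l + (a : ℕ) := by omega
    have e2 : j - k + (k - l + (b : ℕ)) = j - l + (b : ℕ) := by omega
    rw [show ((⟨k - l + (a : ℕ), _⟩ : Fin k) : ℕ) = k - l + (a : ℕ) from rfl,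
      show ((⟨k - l + (b : ℕ), _⟩ : Fin k) : ℕ) = k - l + (b : ℕ) from rfl, e1, e2] at h1
    rw [← h1, h2]
  · -- σ occurs inside τ at position l - k
    refine hinc.1 (l - k) ⟨by omega, fun a b => ?_⟩
    have h1 := hoccτ ⟨l - k + (a : ℕ), by have := a.isLt; omega⟩
      ⟨l - k + (b : ℕ), by have := b.isLt; omega⟩
    have h2 := hoccσ a b
    have e1 : j - l + (l - k + (a : ℕ)) = j - k + (a : ℕ) := by omega
    have e2 : j - l + (l - k + (b : ℕ)) = j - k + (b : ℕ) := by omega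
    rw [show ((⟨l - k + (a : ℕ), _⟩ : Fin l) : ℕ) = l - k + (a : ℕ) from rfl,
      show ((⟨l - k + (b : ℕ), _⟩ : Fin l) : ℕ) = l - k + (b : ℕ) from rfl, e1, e2] at h1
    rw [← h1, h2]

end inc

theorem prob_precedes_via_F (μ : Measure (ℕ → ℝ)) (hμ : IsIIDUniform μ)
    {k l : ℕ} (σ : Equiv.Perm (Fin k)) (τ : Equiv.Perm (Fin l))
    (hinc : Incomparable σ τ)
    (p Fts Fst : ℝ)
    (hp : p = (μ {x | hitTime σ x < hitTime τ x}).toReal)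
    (hp0 : 0 < p) (hp1 : p < 1)
    (hFts : Fts = (1 / (1 - p)) *
      ∫ x in {x | hitTime τ x < hitTime σ x},
        ((hitTime σ x : ℝ) - (hitTime τ x : ℝ)) ∂μ)
    (hFst : Fst = (1 / p) *
      ∫ x in {x | hitTime σ x < hitTime τ x},
        ((hitTime τ x : ℝ) - (hitTime σ x : ℝ)) ∂μ) :
    p = (Fts + (∫ x, (hitTime τ x : ℝ) ∂μ) - ∫ x, (hitTime σ x : ℝ) ∂μ) / (Fts + Fst) := by
  haveI : IsProbabilityMeasure μ := hμ.1
  have hk : 0 < k := k_pos_of_inc hinc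
  have hl : 0 < l := l_pos_of_inc hinc
  have hf : Integrable (fun x => (hitTime σ x : ℝ)) μ := integrable_hit σ hμ hk
  have hg : Integrable (fun x => (hitTime τ x : ℝ)) μ := integrable_hit τ hμ hl
  set A : Set (ℕ → ℝ) := {x | hitTime σ x < hitTime τ x} with hAdef
  set B : Set (ℕ → ℝ) := {x | hitTime τ x < hitTime σ x} with hBdef
  have hA : MeasurableSet A := measurableSet_lt (measurable_hitTime σ) (measurable_hitTime τ)
  have hB : MeasurableSet B := measurableSet_lt (measurable_hitTime τ) (measurable_hitTime σ)
  have hC : μ {x : ℕ → ℝ | hitTime σ x = hitTime τ x} = 0 :=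
    measure_mono_null (eq_hit_subset_zero hinc) (mu_hit_zero σ hμ hk)
  -- B is a.e. equal to Aᶜ
  have hBA : B =ᵐ[μ] Aᶜ := by
    refine (ae_eq_set (s := B) (t := (Aᶜ : Set (ℕ → ℝ)))).2 ?_
    constructor
    · have : B \ Aᶜ = ∅ := by
        ext x
        simp only [Set.mem_diff, Set.mem_compl_iff, hAdef, hBdef, Set.mem_setOf_eq,
          Set.mem_empty_iff_false, iff_false, not_and, not_not]
        intro hx; omega
      rw [this]; exact measure_empty
    · refine measure_mono_null ?_ hC
      rintro x ⟨hx1, hx2⟩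
      have h1 : ¬ (hitTime σ x < hitTime τ x) := hx1
      have h2 : ¬ (hitTime τ x < hitTime σ x) := hx2
      show hitTime σ x = hitTime τ x
      omega
  -- split the integral of the difference
  have hsplit : (∫ x, (hitTime τ x : ℝ) ∂μ) - ∫ x, (hitTime σ x : ℝ) ∂μ
      = (∫ x in A, ((hitTime τ x : ℝ) - (hitTime σ x : ℝ)) ∂μ)
        + ∫ x in B, ((hitTime τ x : ℝ) - (hitTime σ x : ℝ)) ∂μ := by
    have hsub : Integrable (fun x => (hitTime τ x : ℝ) - (hitTime σ x : ℝ)) μ := hg.sub hf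
    rw [← integral_sub hg hf, ← integral_add_compl hA hsub]
    congr 1
    exact (setIntegral_congr_set hBA).symm
  have hpA : (μ A).toReal = p := hp.symm
  have hpB : (μ B).toReal = 1 - p := by
    have h1 : μ B + μ Bᶜ = 1 := by rw [measure_add_measure_compl hB, measure_univ]
    have h2 : μ Bᶜ = μ A := by
      refine le_antisymm ?_ ?_
      · have hsub : Bᶜ ⊆ A ∪ {x : ℕ → ℝ | hitTime σ x = hitTime τ x} := by
          intro x hx
          simp only [Set.mem_compl_iff, hBdef, Set.mem_setOf_eq, not_lt] at hx
          simp only [Set.mem_union, hAdef, Set.mem_setOf_eq]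
          omega
        calc μ Bᶜ ≤ μ A + μ {x : ℕ → ℝ | hitTime σ x = hitTime τ x} :=
              le_trans (measure_mono hsub) (measure_union_le _ _)
          _ = μ A := by rw [hC, add_zero]
      · apply measure_mono
        intro x hx
        simp only [hAdef, Set.mem_setOf_eq] at hx
        simp only [Set.mem_compl_iff, hBdef, Set.mem_setOf_eq]
        omega
    rw [h2] at h1
    have h3 := congrArg ENNReal.toReal h1
    rw [ENNReal.toReal_add (measure_ne_top μ B) (measure_ne_top μ A), hpA] at h3
    simp only [ENNReal.toReal_one] at h3
    linarith
  -- values of the two set integrals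
  have hIA : ∫ x in A, ((hitTime τ x : ℝ) - (hitTime σ x : ℝ)) ∂μ = p * Fst := by
    rw [hFst]
    field_simp
  have hIB : ∫ x in B, ((hitTime τ x : ℝ) - (hitTime σ x : ℝ)) ∂μ = -((1 - p) * Fts) := by
    have h1 : ∫ x in B, ((hitTime τ x : ℝ) - (hitTime σ x : ℝ)) ∂μ
        = - ∫ x in B, ((hitTime σ x : ℝ) - (hitTime τ x : ℝ)) ∂μ := by
      rw [← integral_neg]
      congr 1
      ext x
      ring
    rw [h1, hFts]
    have hp1' : (1 : ℝ) - p ≠ 0 := by linarith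
    field_simp
  -- Fst ≥ 1
  have hFst1 : 1 ≤ Fst := by
    have hgeq : ∀ x ∈ A, (1 : ℝ) ≤ (hitTime τ x : ℝ) - (hitTime σ x : ℝ) := by
      intro x hx
      simp only [hAdef, Set.mem_setOf_eq] at hx
      have : hitTime σ x + 1 ≤ hitTime τ x := hx
      have hcast : (hitTime σ x : ℝ) + 1 ≤ (hitTime τ x : ℝ) := by exact_mod_cast this
      linarith
    have hint := setIntegral_ge_of_const_le_real hA (measure_ne_top μ A) hgeq
      ((hg.sub hf).integrableOn)
    rw [hIA, measureReal_def, hpA, one_mul] at hint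
    have := (mul_le_mul_iff_right₀ hp0).1 (by linarith : p * 1 ≤ p * Fst)
    linarith
  -- Fts ≥ 0
  have hFts0 : 0 ≤ Fts := by
    rw [hFts]
    apply mul_nonneg
    · apply div_nonneg zero_le_one; linarith
    · apply setIntegral_nonneg hB
      intro x hx
      simp only [hBdef, Set.mem_setOf_eq] at hx
      have : (hitTime τ x : ℝ) ≤ (hitTime σ x : ℝ) := by exact_mod_cast hx.le
      linarith
  have hD : 0 < Fts + Fst := by linarith
  have key : Fts + (∫ x, (hitTime τ x : ℝ) ∂μ) - ∫ x, (hitTime σ x : ℝ) ∂μ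
      = p * (Fts + Fst) := by
    have h1 : (∫ x, (hitTime τ x : ℝ) ∂μ) - ∫ x, (hitTime σ x : ℝ) ∂μ
        = p * Fst - (1 - p) * Fts := by rw [hsplit, hIA, hIB]; ring
    have h2 : p * (Fts + Fst) = p * Fts + p * Fst := by ring
    linarith
  rw [key]
  exact (mul_div_cancel_right₀ p hD.ne').symm

end
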